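/- arXiv:gr-qc/9907082 — 3 statements merged into one kernel-verified Lean document; each statement's English description precedes it below -/
import Mathlib

section
/- Let V be a finite-dimensional real vector space, g a symmetric bilinear form on V, and u ∈ V with e := g u u ≠ 0. Suppose ρ ∈ ℝ, φ : V → ℝ is a linear functional with φ u = 0, s ∈ V with g u s = 0, and S : V →ₗ[ℝ] V satisfies S u = 0 and g u (S v) = 0 for all v. If ρ·(g u v)•u + (φ v)•u + (g u v)•s + S v = 0 for all v ∈ V, then ρ = 0, φ = 0, s = 0 and S = 0. Consequently the invariant decomposition of an endomorphism into rest mass density, conductive momentum, conductive energy flux and stress parts subject to these orthogonality constraints is unique. -/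
/-! The hyperplane `ker (g u)` is a complement of the line `ℝ u`, because `g u u ≠ 0`.
Evaluating the identity at `u` splits it along this decomposition into `(ρ e) u` and `e s`, so
`ρ = 0` and `s = 0`; at an arbitrary `v` it then splits into `(φ v) u` and `S v`. -/

theorem smul_add_eq_zero_of_apply_eq_zero {R V : Type*} [Ring R] [NoZeroDivisors R]
    [AddCommGroup V] [Module R V] (f : V →ₗ[R] R) {u w : V} (hu : f u ≠ 0) (hw : f w = 0)
    {a : R} (h : a • u + w = 0) : a = 0 ∧ w = 0 := by
  have ha : a * f u = 0 := by
    simpa [hw] using congrArg f h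
  obtain rfl : a = 0 := (mul_eq_zero.mp ha).resolve_right hu
  exact ⟨rfl, by simpa using h⟩

theorem decomposition_uniqueness_general
    (V : Type*) [AddCommGroup V] [Module ℝ V]
    (g : V →ₗ[ℝ] V →ₗ[ℝ] ℝ)
    (u : V) (he : g u u ≠ 0)
    (ρ : ℝ) (φ : V →ₗ[ℝ] ℝ) (hφ : φ u = 0)
    (s : V) (hs : g u s = 0)
    (S : V →ₗ[ℝ] V) (hSu : S u = 0) (hgS : ∀ v : V, g u (S v) = 0)
    (h : ∀ v : V, (ρ * (g u v)) • u + (φ v) • u + (g u v) • s + S v = 0) :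
    ρ = 0 ∧ φ = 0 ∧ s = 0 ∧ S = 0 := by
  have hu : (ρ * g u u) • u + g u u • s = 0 := by
    simpa [hφ, hSu] using h u
  obtain ⟨hρe, hes⟩ := smul_add_eq_zero_of_apply_eq_zero (g u) he (by simp [hs]) hu
  obtain rfl : ρ = 0 := (mul_eq_zero.mp hρe).resolve_right he
  obtain rfl : s = 0 := (smul_eq_zero.mp hes).resolve_left he
  have hv (v : V) : φ v = 0 ∧ S v = 0 := by
    refine smul_add_eq_zero_of_apply_eq_zero (g u) he (hgS v) ?_
    simpa using h v
  exact ⟨rfl, LinearMap.ext fun v ↦ (hv v).1, rfl, LinearMap.ext fun v ↦ (hv v).2⟩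

/-- Uniqueness of the invariant decomposition: if
ρ·u⊗g(u) + u⊗φ + s⊗g(u) + S = 0 with φ u = 0, g u s = 0, S u = 0 and
the range of S g-orthogonal to u, then all the pieces vanish. -/
theorem decomposition_uniqueness
    (V : Type*) [AddCommGroup V] [Module ℝ V] [FiniteDimensional ℝ V]
    (g : V →ₗ[ℝ] V →ₗ[ℝ] ℝ) (hg : ∀ v w : V, g v w = g w v)
    (u : V) (he : g u u ≠ 0)
    (ρ : ℝ) (φ : V →ₗ[ℝ] ℝ) (hφ : φ u = 0)
    (s : V) (hs : g u s = 0)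
    (S : V →ₗ[ℝ] V) (hSu : S u = 0) (hgS : ∀ v : V, g u (S v) = 0)
    (h : ∀ v : V, (ρ * (g u v)) • u + (φ v) • u + (g u v) • s + S v = 0) :
    ρ = 0 ∧ φ = 0 ∧ s = 0 ∧ S = 0 :=
  decomposition_uniqueness_general V g u he ρ φ hφ s hs S hSu hgS h
end

section
/- Let V be a finite-dimensional real vector space, g a symmetric bilinear form on V, u ∈ V with e := g u u ≠ 0, and P v = v − (g u v / e) • u. For an endomorphism G : V →ₗ[ℝ] V define the momentum density covector ψ_G := ρ_G·g(u) + φ_G, i.e. ψ_G v = ρ_G·(g u v) + φ_G v. Then: (i) ψ_G v = (1/e)·g u (G v) for all v ∈ V (the formula p_G = (1/e)·[g(u)](G)(ḡ)); and (ii) G admits the representation G v = (ψ_G v) • u + (g u v) • s_G + S_G v for all v ∈ V (representation of G by means of the projective metrics of u and the momentum density). -/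
/-!
Every vector splits as `w = (g u w / g u u) • u + P w`. Applying this to `v`, then to `G u` and
to `G (P v)`, expands `G v` into a multiple of `u`, a multiple of `P (G u)` and `P (G (P v))`;
the coefficient of `u` is `ψ_G v`, and pairing the first expansion with `u` gives `(i)`.
-/

section OrthogonalSplitting

variable {K V W : Type*} [Field K] [AddCommGroup V] [Module K V] [AddCommGroup W] [Module K W]
  {g : V →ₗ[K] V →ₗ[K] K} {u : V} {P : V →ₗ[K] V}

theorem eq_smul_add_of_proj (hP : ∀ v, P v = v - (g u v / g u u) • u) (w : V) :
    w = (g u w / g u u) • u + P w := by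
  rw [hP, add_sub_cancel]

theorem apply_eq_smul_add_apply_proj (f : V →ₗ[K] W)
    (hP : ∀ v, P v = v - (g u v / g u u) • u) (v : V) :
    f v = (g u v / g u u) • f u + f (P v) := by
  conv_lhs => rw [eq_smul_add_of_proj hP v]
  rw [map_add, map_smul]

end OrthogonalSplitting

theorem momentum_density_covector_general
    (V : Type*) [AddCommGroup V] [Module ℝ V]
    (g : V →ₗ[ℝ] V →ₗ[ℝ] ℝ)
    (u : V)
    (P : V →ₗ[ℝ] V) (hP : ∀ v : V, P v = v - (g u v / g u u) • u)
    (G : V →ₗ[ℝ] V) :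
    (∀ v : V,
      (1 / (g u u) ^ 2) * g u (G u) * (g u v)
        + (1 / (g u u)) * g u (G (P v))
      = (1 / (g u u)) * g u (G v)) ∧
    (∀ v : V,
      G v = ((1 / (g u u) ^ 2) * g u (G u) * (g u v)
              + (1 / (g u u)) * g u (G (P v))) • u
        + (g u v) • ((1 / (g u u)) • P (G u))
        + P (G (P v))) := by
  refine ⟨fun v => ?_, fun v => ?_⟩
  · have h := apply_eq_smul_add_apply_proj ((g u).comp G) hP v
    simp only [LinearMap.comp_apply, smul_eq_mul] at h
    rw [h]
    ring
  · calc G v = (g u v / g u u) • G u + G (P v) := apply_eq_smul_add_apply_proj G hP v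
      _ = (g u v / g u u) • ((g u (G u) / g u u) • u + P (G u))
            + ((g u (G (P v)) / g u u) • u + P (G (P v))) := by
          rw [← eq_smul_add_of_proj hP, ← eq_smul_add_of_proj hP]
      _ = _ := by module

/-- The momentum density covector ψ_G = ρ_G·g(u) + φ_G satisfies
ψ_G = (1/e)·[g(u)](G), and G admits the representation
G = u⊗ψ_G + s_G⊗g(u) + S_G. -/
theorem momentum_density_covector
    (V : Type*) [AddCommGroup V] [Module ℝ V] [FiniteDimensional ℝ V]
    (g : V →ₗ[ℝ] V →ₗ[ℝ] ℝ) (hg : ∀ v w : V, g v w = g w v)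
    (u : V) (he : g u u ≠ 0)
    (P : V →ₗ[ℝ] V) (hP : ∀ v : V, P v = v - (g u v / g u u) • u)
    (G : V →ₗ[ℝ] V) :
    (∀ v : V,
      (1 / (g u u) ^ 2) * g u (G u) * (g u v)
        + (1 / (g u u)) * g u (G (P v))
      = (1 / (g u u)) * g u (G v)) ∧
    (∀ v : V,
      G v = ((1 / (g u u) ^ 2) * g u (G u) * (g u v)
              + (1 / (g u u)) * g u (G (P v))) • u
        + (g u v) • ((1 / (g u u)) • P (G u))
        + P (G (P v))) :=
  momentum_density_covector_general V g u P hP G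
end

section
/- Let V be a finite-dimensional real vector space, g a symmetric bilinear form on V, u ∈ V with e := g u u ≠ 0, and P v = v − (g u v / e) • u. For an endomorphism G : V →ₗ[ℝ] V define the energy flux density e_G := G u. Then: (i) e_G = e • (ρ_G • u + s_G), i.e. G u decomposes into the convective energy flux ρ_G·e•u and the conductive energy flux e•s_G; and (ii) G admits the representation G v = (g u v / e) • e_G + (φ_G v) • u + S_G v for all v ∈ V (representation of G by means of the projective metrics of u and the energy flux density). -/
/-- The energy flux density e_G = G u decomposes into convective and
conductive parts, e_G = e•(ρ_G•u + s_G), and G admits the representation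
G = (1/e)·e_G⊗g(u) + u⊗φ_G + S_G. -/
theorem energy_flux_density
    (V : Type*) [AddCommGroup V] [Module ℝ V] [FiniteDimensional ℝ V]
    (g : V →ₗ[ℝ] V →ₗ[ℝ] ℝ) (hg : ∀ v w : V, g v w = g w v)
    (u : V) (he : g u u ≠ 0)
    (P : V →ₗ[ℝ] V) (hP : ∀ v : V, P v = v - (g u v / g u u) • u)
    (G : V →ₗ[ℝ] V) :
    (G u = (g u u) • (((1 / (g u u) ^ 2) * g u (G u)) • u
              + (1 / (g u u)) • P (G u))) ∧
    (∀ v : V,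
      G v = (g u v / (g u u)) • (G u)
        + ((1 / (g u u)) * g u (G (P v))) • u
        + P (G (P v))) := by
  have key : ∀ x : V, x = (g u u) • (((1 / (g u u) ^ 2) * g u x) • u
      + (1 / (g u u)) • P x) := by
    intro x
    rw [hP]
    match_scalars
    · field_simp
    · field_simp
      ring
  refine ⟨key (G u), fun v => ?_⟩
  have h2 : P (G (P v)) = G (P v) - ((1 / (g u u)) * g u (G (P v))) • u := by
    rw [hP]; match_scalars <;> field_simp
  rw [h2]
  have h3 : G (P v) = G v - (g u v / g u u) • G u := by
    rw [hP, map_sub, map_smul]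
  rw [h3]
  abel
end
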